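/- Let G be a finite simple graph on a vertex set V and let u ∈ V. Let G' be the simple graph on the vertex set V ⊕ {v, w} (two new vertices v and w) whose edges are exactly the edges of G together with the edge {u, v} and the edge {v, w}. Then c_0(G') − c_1(G') = 2·(c_0(G) − c_1(G)); in particular, if G is net-zero then G' is net-zero. -/

import Mathlib

/-!
Write `c₀ - c₁` as `∑ₓ ∏ₑ σₓ(e)`, where `σₓ(e) = -1` exactly on black-black edges. A coloring of
`G'` is a coloring `x` of `G` together with colors of `v, w`, and its product is the one of `x`
times `σ(uv) σ(vw)`. Summed over the four colorings of `v, w` this factor is `2` whatever the color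
of `u`: if `v` is white both signs are `1`, and if `v` is black the sign of `vw` cancels over the
two colors of `w`.
-/

attribute [local instance] Classical.propDecidable

/-- The number of 2-colorings (`1` = black) of the vertices of `G` for which the
number of black-black edges is even. -/
noncomputable def colEven {V : Type*} [Fintype V] (G : SimpleGraph V) : ℕ :=
  (Finset.univ.filter fun x : V → Fin 2 =>
    Even (G.edgeFinset.filter fun e => ∀ v ∈ e, x v = 1).card).card

/-- The number of 2-colorings of the vertices of `G` for which the
number of black-black edges is odd. -/
noncomputable def colOdd {V : Type*} [Fintype V] (G : SimpleGraph V) : ℕ :=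
  (Finset.univ.filter fun x : V → Fin 2 =>
    Odd (G.edgeFinset.filter fun e => ∀ v ∈ e, x v = 1).card).card

open Finset

theorem Finset.sum_neg_one_pow {α : Type*} (s : Finset α) (f : α → ℕ) :
    ∑ a ∈ s, (-1 : ℤ) ^ f a = #{a ∈ s | Even (f a)} - #{a ∈ s | Odd (f a)} := by
  rw [← sum_filter_add_sum_filter_not s (fun a => Even (f a)),
    sum_congr rfl fun a ha => (mem_filter.1 ha).2.neg_one_pow,
    sum_congr rfl fun a ha => (Nat.not_even_iff_odd.1 (mem_filter.1 ha).2).neg_one_pow]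
  simp only [sum_const, smul_neg, nsmul_eq_mul, mul_one, Nat.not_even_iff_odd, sub_eq_add_neg]

theorem Sym2.map_inl_ne_of_inr_mem {α β : Type*} (x : Sym2 α) {z : Sym2 (α ⊕ β)} {b : β}
    (hb : Sum.inr b ∈ z) : Sym2.map Sum.inl x ≠ z := by
  rintro rfl
  simp [Sym2.mem_map] at hb

namespace SimpleGraph

variable {V : Type*}

def withPendantPath (G : SimpleGraph V) (u : V) : SimpleGraph (V ⊕ Fin 2) :=
  fromEdgeSet ((Sym2.map Sum.inl '' G.edgeSet) ∪
    {s(Sum.inl u, Sum.inr 0), s(Sum.inr 0, Sum.inr 1)})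

theorem edgeSet_withPendantPath (G : SimpleGraph V) (u : V) :
    (G.withPendantPath u).edgeSet = (Sym2.map Sum.inl '' G.edgeSet) ∪
      {s(Sum.inl u, Sum.inr 0), s(Sum.inr 0, Sum.inr 1)} := by
  rw [withPendantPath, edgeSet_fromEdgeSet, sdiff_eq_left, Set.disjoint_right]
  rintro _ hdiag (⟨e, he, rfl⟩ | h)
  · exact G.not_isDiag_of_mem_edgeSet he ((Sym2.isDiag_map Sum.inl_injective).1 hdiag)
  · rcases h with rfl | rfl <;> simp_all

theorem prod_edgeFinset_withPendantPath [Fintype V] {M : Type*} [CommMonoid M]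
    (G : SimpleGraph V) (u : V) (f : Sym2 (V ⊕ Fin 2) → M) :
    ∏ e ∈ (G.withPendantPath u).edgeFinset, f e =
      f s(Sum.inl u, Sum.inr 0) * f s(Sum.inr 0, Sum.inr 1) *
        ∏ e ∈ G.edgeFinset, f (Sym2.map Sum.inl e) := by
  have hedges : (G.withPendantPath u).edgeFinset =
      insert s(Sum.inl u, Sum.inr 0) (insert s(Sum.inr 0, Sum.inr 1)
        (G.edgeFinset.map ⟨_, Sym2.map.injective Sum.inl_injective⟩)) := by
    ext e
    simp [edgeSet_withPendantPath]
  rw [hedges, prod_insert, prod_insert, prod_map, mul_assoc]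
  · rfl
  all_goals simpa using fun x _ => Sym2.map_inl_ne_of_inr_mem x (b := 0) (by simp)

noncomputable def edgeSign (x : V → Fin 2) (e : Sym2 V) : ℤ :=
  if ∀ v ∈ e, x v = 1 then -1 else 1

theorem edgeSign_mk (x : V → Fin 2) (a b : V) :
    edgeSign x s(a, b) = if x a = 1 ∧ x b = 1 then -1 else 1 := by
  simp [edgeSign]

theorem edgeSign_map_inl {W : Type*} (x : V ⊕ W → Fin 2) (e : Sym2 V) :
    edgeSign x (Sym2.map Sum.inl e) = edgeSign (x ∘ Sum.inl) e := by
  simp [edgeSign]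

theorem prod_edgeSign (x : V → Fin 2) (s : Finset (Sym2 V)) :
    ∏ e ∈ s, edgeSign x e = (-1) ^ #{e ∈ s | ∀ v ∈ e, x v = 1} := by
  simp [edgeSign, prod_ite]

noncomputable def signedCount [Fintype V] (G : SimpleGraph V) : ℤ :=
  ∑ x : V → Fin 2, ∏ e ∈ G.edgeFinset, edgeSign x e

theorem signedCount_eq [Fintype V] (G : SimpleGraph V) :
    G.signedCount = colEven G - colOdd G := by
  rw [signedCount, colEven, colOdd, ← sum_neg_one_pow]
  refine sum_congr rfl fun x _ => ?_
  rw [prod_edgeSign]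
  -- the two filters differ only in their `Decidable` instances
  congr!

theorem sum_edgeSign_pendantPath (x : V → Fin 2) (u : V) :
    ∑ y : Fin 2 → Fin 2, edgeSign (Sum.elim x y) s(Sum.inl u, Sum.inr 0) *
      edgeSign (Sum.elim x y) s(Sum.inr 0, Sum.inr 1) = 2 := by
  rw [← (piFinTwoEquiv fun _ => Fin 2).symm.sum_comp, Fintype.sum_prod_type]
  simp only [edgeSign_mk, Sum.elim_inl, Sum.elim_inr]
  obtain hu | hu : x u = 0 ∨ x u = 1 := by omega
  all_goals simp [hu, Fin.sum_univ_two]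

theorem signedCount_withPendantPath [Fintype V] (G : SimpleGraph V) (u : V) :
    (G.withPendantPath u).signedCount = 2 * G.signedCount := by
  calc (G.withPendantPath u).signedCount
      = ∑ x : V → Fin 2, ∑ y : Fin 2 → Fin 2,
          ∏ e ∈ (G.withPendantPath u).edgeFinset, edgeSign (Sum.elim x y) e := by
        rw [signedCount, ← Fintype.sum_prod_type' fun x y => ∏ e ∈ _, edgeSign (Sum.elim x y) e]
        -- `convert` reconciles the `DecidableEq (V ⊕ Fin 2)` instances of the two `Fintype`s
        convert ((Equiv.sumArrowEquivProdArrow V (Fin 2) (Fin 2)).symm.sum_comp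
          fun x => ∏ e ∈ (G.withPendantPath u).edgeFinset, edgeSign x e).symm
        rfl
    _ = ∑ x : V → Fin 2, (∑ y : Fin 2 → Fin 2, edgeSign (Sum.elim x y) s(Sum.inl u, Sum.inr 0) *
          edgeSign (Sum.elim x y) s(Sum.inr 0, Sum.inr 1)) * ∏ e ∈ G.edgeFinset, edgeSign x e := by
        simp only [prod_edgeFinset_withPendantPath, edgeSign_map_inl, Sum.elim_comp_inl, sum_mul]
    _ = 2 * G.signedCount := by
        simp only [sum_edgeSign_pendantPath, signedCount, mul_sum]

end SimpleGraph

theorem stmt_16 {V : Type*} [Fintype V] (G : SimpleGraph V) (u : V)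
    (G' : SimpleGraph (V ⊕ Fin 2))
    (hG' : G' = SimpleGraph.fromEdgeSet
      ((Sym2.map Sum.inl '' G.edgeSet) ∪
        {s(Sum.inl u, Sum.inr 0), s(Sum.inr 0, Sum.inr 1)})) :
    (colEven G' : ℤ) - colOdd G' = 2 * ((colEven G : ℤ) - colOdd G) ∧
    (colEven G = colOdd G → colEven G' = colOdd G') := by
  have hsigned : (colEven G' : ℤ) - colOdd G' = 2 * ((colEven G : ℤ) - colOdd G) := by
    rw [← SimpleGraph.signedCount_eq, ← SimpleGraph.signedCount_eq, hG']
    exact G.signedCount_withPendantPath u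
  refine ⟨hsigned, fun h => ?_⟩
  rw [h, sub_self, mul_zero, sub_eq_zero] at hsigned
  exact_mod_cast hsigned
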